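/- arXiv:0903.1900 — 2 statements merged into one kernel-verified Lean document; each statement's English description precedes it below -/
import Mathlib

section
/- Let u : ℝ → ℝ be smooth with u'' > 0, lim_{ρ→−∞} u'(ρ) = a, lim_{ρ→+∞} u'(ρ) = b, a < b. Suppose there exists a constant C > 0 such that |u'''(ρ)| ≤ C·u''(ρ) for all ρ, and suppose u'' attains its supremum at some point ρ̃ ∈ ℝ. Then sup_ρ u''(ρ) ≤ 2C(b − a). -/
theorem stmt_6 (u : ℝ → ℝ) (a b C ρ₀ : ℝ)
    (hu : ContDiff ℝ (⊤ : ℕ∞) u)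
    (hu'' : ∀ ρ : ℝ, 0 < deriv (deriv u) ρ)
    (ha : Filter.Tendsto (deriv u) Filter.atBot (nhds a))
    (hb : Filter.Tendsto (deriv u) Filter.atTop (nhds b))
    (hab : a < b) (hC : 0 < C)
    (hu''' : ∀ ρ : ℝ, |deriv (deriv (deriv u)) ρ| ≤ C * deriv (deriv u) ρ)
    (hmax : ∀ ρ : ℝ, deriv (deriv u) ρ ≤ deriv (deriv u) ρ₀) :
    ∀ ρ : ℝ, deriv (deriv u) ρ ≤ 2 * C * (b - a) := by
  set v := deriv (deriv u) with hv
  set M := v ρ₀ with hMdef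
  have hMpos : 0 < M := hu'' ρ₀
  have hu' : ContDiff ℝ (↑(⊤:ℕ∞)) u := hu.of_le (by simp)
  obtain ⟨hdu, hu1⟩ := contDiff_infty_iff_deriv.mp hu'
  obtain ⟨hdu1, hu2⟩ := contDiff_infty_iff_deriv.mp hu1
  obtain ⟨hdv, hu3⟩ := contDiff_infty_iff_deriv.mp hu2
  -- u' is monotone
  have hmono : StrictMono (deriv u) := strictMono_of_deriv_pos hu''
  have hub : ∀ x, deriv u x ≤ b := fun x =>
    ge_of_tendsto hb (Filter.eventually_atTop.2 ⟨x, fun y hy => hmono.le_iff_le.2 hy⟩)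
  have hlb : ∀ x, a ≤ deriv u x := fun x =>
    le_of_tendsto ha (Filter.eventually_atBot.2 ⟨x, fun y hy => hmono.le_iff_le.2 hy⟩)
  -- Lipschitz bound on v
  have hlip : ∀ x : ℝ, ‖v x - v ρ₀‖ ≤ (C * M) * ‖x - ρ₀‖ := by
    intro x
    refine convex_univ.norm_image_sub_le_of_norm_deriv_le (f := v)
      (fun y _ => hdv y) ?_ (Set.mem_univ ρ₀) (Set.mem_univ x)
    intro y _
    rw [Real.norm_eq_abs]
    refine (hu''' y).trans ?_
    have h1 := hmax y
    have h2 := hu'' y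
    nlinarith
  set δ : ℝ := 1 / (2 * C) with hδdef
  have hδpos : 0 < δ := by positivity
  have hhalf : ∀ x ∈ Set.Icc (ρ₀ - δ) (ρ₀ + δ), M / 2 ≤ v x := by
    intro x hx
    have h1 : ‖v x - v ρ₀‖ ≤ (C * M) * δ := by
      refine le_trans (hlip x) ?_
      have : ‖x - ρ₀‖ ≤ δ := by
        rw [Real.norm_eq_abs, abs_le]
        constructor <;> [linarith [hx.1]; linarith [hx.2]]
      exact mul_le_mul_of_nonneg_left this (mul_nonneg hC.le hMpos.le)
    have h2 : (C * M) * δ = M / 2 := by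
      rw [hδdef]
      field_simp
    rw [h2] at h1
    have := abs_le.mp h1
    simp only [← hMdef] at this ⊢
    linarith [this.1]
  have hle : ρ₀ - δ ≤ ρ₀ + δ := by linarith
  have hcont : Continuous v := hu2.continuous
  have hint : ∫ x in (ρ₀ - δ)..(ρ₀ + δ), v x = deriv u (ρ₀ + δ) - deriv u (ρ₀ - δ) :=
    intervalIntegral.integral_deriv_eq_sub (fun x _ => hdu1 x)
      (hcont.intervalIntegrable _ _)
  have hlow : (M / 2) * (2 * δ) ≤ ∫ x in (ρ₀ - δ)..(ρ₀ + δ), v x := by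
    have := intervalIntegral.integral_mono_on (μ := MeasureTheory.volume)
      (f := fun _ => M / 2) (g := v) hle (intervalIntegrable_const)
      (hcont.intervalIntegrable _ _) hhalf
    rw [intervalIntegral.integral_const] at this
    have heq : (ρ₀ + δ - (ρ₀ - δ)) • (M / 2) = (M / 2) * (2 * δ) := by
      simp only [smul_eq_mul]; ring
    linarith [heq ▸ this]
  have hkey : (M / 2) * (2 * δ) ≤ b - a := by
    rw [hint] at hlow
    have := hub (ρ₀ + δ)
    have := hlb (ρ₀ - δ)
    linarith
  have hM2 : M ≤ 2 * C * (b - a) := by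
    have h2δ : 2 * δ = 1 / C := by rw [hδdef]; field_simp
    rw [h2δ] at hkey
    have hC' : C ≠ 0 := ne_of_gt hC
    have : M / (2 * C) ≤ b - a := by
      rw [div_eq_mul_one_div]
      calc M * (1 / (2*C)) = M / 2 * (1 / C) := by ring
        _ ≤ b - a := hkey
    nlinarith [(div_le_iff₀ (by positivity : (0:ℝ) < 2*C)).mp this]
  intro ρ
  exact le_trans (hmax ρ) hM2
end

section
/- Let u₀ : [0,∞) → ℝ be smooth with u₀'(0) > 0, let 0 < a < b and k > 0, and set u(ρ) = aρ + u₀(e^{kρ}), assuming u'' > 0 and a < u' < b on ℝ. Then limsup_{ρ→−∞} u''(ρ)/((u'(ρ)−a)(b−u'(ρ))) ≤ k/(b−a) + 1; in particular the quantity u''/((u'−a)(b−u')) is bounded as ρ → −∞. -/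
theorem stmt_17 (u₀ : ℝ → ℝ) (a b : ℝ) (k : ℝ) (hk : 0 < k)
    (hu₀ : ContDiff ℝ (⊤ : ℕ∞) u₀) (hu₀' : 0 < deriv u₀ 0)
    (ha : 0 < a) (hab : a < b)
    (u : ℝ → ℝ)
    (hu : ∀ ρ : ℝ, u ρ = a * ρ + u₀ (Real.exp (k * ρ)))
    (hconv : ∀ ρ : ℝ, 0 < deriv (deriv u) ρ)
    (hrange : ∀ ρ : ℝ, a < deriv u ρ ∧ deriv u ρ < b) :
    Filter.limsup
      (fun ρ => deriv (deriv u) ρ / ((deriv u ρ - a) * (b - deriv u ρ)))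
      Filter.atBot ≤ k / (b - a) + 1 ∧
    ∃ M : ℝ, ∀ᶠ ρ in Filter.atBot,
      deriv (deriv u) ρ / ((deriv u ρ - a) * (b - deriv u ρ)) ≤ M := by
  set f₁ : ℝ → ℝ := deriv u₀ with hf₁
  have hc1 : ContDiff ℝ (⊤ : ℕ∞) f₁ := (contDiff_infty_iff_deriv.mp (hu₀.of_le (by simp))).2
  set f₂ : ℝ → ℝ := deriv f₁ with hf₂
  have hc2 : ContDiff ℝ (⊤ : ℕ∞) f₂ := (contDiff_infty_iff_deriv.mp hc1).2
  have hexp : ∀ ρ : ℝ, HasDerivAt (fun x => Real.exp (k * x)) (k * Real.exp (k * ρ)) ρ := by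
    intro ρ
    have h1 : HasDerivAt (fun x : ℝ => k * x) k ρ := by
      simpa using (hasDerivAt_id ρ).const_mul k
    exact h1.exp.congr_deriv (mul_comm _ _)
  have hueq : u = fun ρ => a * ρ + u₀ (Real.exp (k * ρ)) := funext hu
  have hder1 : ∀ ρ : ℝ,
      HasDerivAt u (a + f₁ (Real.exp (k * ρ)) * (k * Real.exp (k * ρ))) ρ := by
    intro ρ
    rw [hueq]
    have h2 : HasDerivAt (fun x => u₀ (Real.exp (k * x)))
        (f₁ (Real.exp (k * ρ)) * (k * Real.exp (k * ρ))) ρ :=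
      ((hu₀.differentiable (by simp) (Real.exp (k * ρ))).hasDerivAt).comp ρ (hexp ρ)
    have h3 : HasDerivAt (fun x : ℝ => a * x) a ρ := by
      simpa using (hasDerivAt_id ρ).const_mul a
    exact h3.add h2
  have hv : deriv u = fun ρ => a + f₁ (Real.exp (k * ρ)) * (k * Real.exp (k * ρ)) :=
    funext fun ρ => (hder1 ρ).deriv
  have hder2 : ∀ ρ : ℝ,
      HasDerivAt (deriv u)
        (f₂ (Real.exp (k * ρ)) * (k * Real.exp (k * ρ)) * (k * Real.exp (k * ρ))
          + f₁ (Real.exp (k * ρ)) * (k * (k * Real.exp (k * ρ)))) ρ := by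
    intro ρ
    rw [hv]
    have hA : HasDerivAt (fun x => f₁ (Real.exp (k * x)))
        (f₂ (Real.exp (k * ρ)) * (k * Real.exp (k * ρ))) ρ :=
      by have := ((hc1.differentiable (by simp) (Real.exp (k * ρ))).hasDerivAt).comp ρ (hexp ρ); exact this
    have hB : HasDerivAt (fun x => k * Real.exp (k * x)) (k * (k * Real.exp (k * ρ))) ρ :=
      (hexp ρ).const_mul k
    exact (hA.mul hB).const_add a
  have hw : deriv (deriv u) = fun ρ =>
      f₂ (Real.exp (k * ρ)) * (k * Real.exp (k * ρ)) * (k * Real.exp (k * ρ))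
        + f₁ (Real.exp (k * ρ)) * (k * (k * Real.exp (k * ρ))) :=
    funext fun ρ => (hder2 ρ).deriv
  -- the reduced function
  set G : ℝ → ℝ := fun t =>
    (f₂ t * (k * t) + f₁ t * k) / (f₁ t * (b - a - f₁ t * (k * t))) with hG
  have hkey : ∀ ρ : ℝ,
      deriv (deriv u) ρ / ((deriv u ρ - a) * (b - deriv u ρ)) = G (Real.exp (k * ρ)) := by
    intro ρ
    set e := Real.exp (k * ρ) with he
    have hke : (0 : ℝ) < k * e := by positivity
    have hnum : deriv (deriv u) ρ = (k * e) * (f₂ e * (k * e) + f₁ e * k) := by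
      rw [hw]; ring
    have hden : (deriv u ρ - a) * (b - deriv u ρ)
        = (k * e) * (f₁ e * (b - a - f₁ e * (k * e))) := by
      rw [hv]; ring
    rw [hnum, hden, hG]
    exact mul_div_mul_left _ _ (ne_of_gt hke)
  have hf₁0 : 0 < f₁ 0 := hu₀'
  have hden0 : f₁ 0 * (b - a - f₁ 0 * (k * 0)) ≠ 0 := by
    have : f₁ 0 * (b - a - f₁ 0 * (k * 0)) = f₁ 0 * (b - a) := by ring
    rw [this]
    exact ne_of_gt (mul_pos hu₀' (by linarith))
  have hcont1 : Continuous f₁ := hc1.continuous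
  have hcont2 : Continuous f₂ := hc2.continuous
  have hGcont : ContinuousAt G 0 := by
    apply ContinuousAt.div
    · fun_prop
    · fun_prop
    · exact hden0
  have hG0 : G 0 = k / (b - a) := by
    rw [hG]
    simp only [mul_zero, zero_add, sub_zero]
    exact mul_div_mul_left k (b - a) (ne_of_gt hu₀')
  have htend0 : Filter.Tendsto (fun ρ : ℝ => Real.exp (k * ρ)) Filter.atBot (nhds 0) := by
    apply Real.tendsto_exp_atBot.comp
    exact Filter.Tendsto.const_mul_atBot hk Filter.tendsto_id
  have hR : Filter.Tendsto
      (fun ρ => deriv (deriv u) ρ / ((deriv u ρ - a) * (b - deriv u ρ)))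
      Filter.atBot (nhds (k / (b - a))) := by
    rw [← hG0]
    have := (hGcont.tendsto).comp htend0
    exact this.congr fun ρ => (hkey ρ).symm
  constructor
  · rw [hR.limsup_eq]
    have : 0 < k / (b - a) := by
      apply div_pos hk; linarith
    linarith
  · refine ⟨k / (b - a) + 1, ?_⟩
    have := hR.eventually (gt_mem_nhds (lt_add_one (k / (b - a))))
    exact this.mono fun ρ h => le_of_lt h
end
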